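/- arXiv:1907.11705 — 5 statements merged into one kernel-verified Lean document; each statement's English description precedes it below -/
import Mathlib

section
/- Let Z ∈ ℝ^{n₁×n₂} have singular value decomposition Z = UΣVᵀ, where U ∈ ℝ^{n₁×k} and V ∈ ℝ^{n₂×k} have orthonormal columns, Σ = diag(σ₁,…,σ_k) with σ₁ ≥ … ≥ σ_k > 0, and k = rank(Z). For τ > 0 define the singular value thresholding operator D_τ(Z) = U diag((σ₁−τ)₊, …, (σ_k−τ)₊) Vᵀ, where t₊ = max{t,0}. Then D_τ(Z) is the unique minimizer over X ∈ ℝ^{n₁×n₂} of the function X ↦ τ‖X‖_* + (1/2)‖X − Z‖_F². -/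
open Matrix

/-- The singular values of `X` (unordered), i.e. square roots of the
eigenvalues of `Xᵀ * X` (over `ℝ`, `Xᴴ = Xᵀ`). -/
noncomputable def singularValues {n₁ n₂ : ℕ} (X : Matrix (Fin n₁) (Fin n₂) ℝ) : Fin n₂ → ℝ :=
  fun i => Real.sqrt ((Matrix.isHermitian_conjTranspose_mul_self X).eigenvalues i)

/-- The nuclear norm: sum of the singular values. -/
noncomputable def nuclearNorm {n₁ n₂ : ℕ} (X : Matrix (Fin n₁) (Fin n₂) ℝ) : ℝ :=
  ∑ i, singularValues X i

/-- The square of the Frobenius norm. -/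
noncomputable def frobSq {n₁ n₂ : ℕ} (X : Matrix (Fin n₁) (Fin n₂) ℝ) : ℝ :=
  ∑ i, ∑ j, (X i j) ^ 2
/-!
With `m i = min (σ i) τ` we have `Z - D = U diag(m) Vᵀ`, a matrix of spectral norm at most `τ`
with `⟪D, Z - D⟫ = τ ∑ (σ i - τ)₊ = τ ‖D‖_*`; that is, `Z - D` is a subgradient of `τ‖·‖_*` at `D`.
Trace duality `⟪X, G⟫ ≤ ‖G‖ ‖X‖_*` then gives, for every `X`,
`τ‖X‖_* + ½‖X - Z‖_F² ≥ τ‖D‖_* + ½‖D - Z‖_F² + ½‖X - D‖_F²`.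
-/

open scoped Matrix.Norms.L2Operator MatrixOrder RealInnerProductSpace

namespace Matrix

section

variable {m n k 𝕜 : Type*} [Fintype m] [Fintype n] [Fintype k] [RCLike 𝕜]

theorem l2_opNorm_le_one_of_conjTranspose_mul_self_eq_one [DecidableEq n] {U : Matrix m n 𝕜}
    (hU : Uᴴ * U = 1) : ‖U‖ ≤ 1 := by
  have hUU : ‖U‖ * ‖U‖ ≤ 1 := by
    rw [← l2_opNorm_conjTranspose_mul_self, hU, ← diagonal_one, l2_opNorm_diagonal]
    exact (pi_norm_le_iff_of_nonneg zero_le_one).mpr fun _ => norm_one.le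
  nlinarith [norm_nonneg U]

theorem l2_opNorm_mul_diagonal_mul_conjTranspose_le [DecidableEq m] [DecidableEq n]
    [DecidableEq k] {U : Matrix m k 𝕜} {V : Matrix n k 𝕜} (hU : Uᴴ * U = 1) (hV : Vᴴ * V = 1)
    (c : k → 𝕜) : ‖U * diagonal c * Vᴴ‖ ≤ ‖c‖ :=
  calc ‖U * diagonal c * Vᴴ‖ ≤ ‖U‖ * ‖(diagonal c : Matrix k k 𝕜)‖ * ‖Vᴴ‖ :=
        (l2_opNorm_mul _ _).trans (mul_le_mul_of_nonneg_right (l2_opNorm_mul _ _) (norm_nonneg _))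
    _ ≤ 1 * ‖c‖ * 1 := by
        rw [l2_opNorm_conjTranspose, l2_opNorm_diagonal]
        gcongr
        · exact l2_opNorm_le_one_of_conjTranspose_mul_self_eq_one hU
        · exact l2_opNorm_le_one_of_conjTranspose_mul_self_eq_one hV
    _ = ‖c‖ := by ring

end

theorem trace_transpose_mul_of_diagonal_factors {m n k R : Type*} [Fintype m] [Fintype n]
    [Fintype k] [DecidableEq k] [CommRing R] {U : Matrix m k R} {V : Matrix n k R}
    (hU : Uᵀ * U = 1) (hV : Vᵀ * V = 1) (d e : k → R) :
    trace ((U * diagonal d * Vᵀ)ᵀ * (U * diagonal e * Vᵀ)) = ∑ i, d i * e i := by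
  simp only [transpose_mul, transpose_transpose, diagonal_transpose, Matrix.mul_assoc]
  rw [← Matrix.mul_assoc Uᵀ, hU, Matrix.one_mul, trace_mul_comm, Matrix.mul_assoc,
    Matrix.mul_assoc, hV, Matrix.mul_one, diagonal_mul_diagonal, trace_diagonal]

theorem IsHermitian.trace_cfc {n : Type*} [Fintype n] [DecidableEq n] {A : Matrix n n ℝ}
    (hA : A.IsHermitian) (f : ℝ → ℝ) : trace (cfc f A) = ∑ i, f (hA.eigenvalues i) := by
  rw [hA.cfc_eq, IsHermitian.cfc, Unitary.conjStarAlgAut_apply, trace_mul_cycle,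
    Unitary.coe_star_mul_self, one_mul, trace_diagonal]
  rfl

end Matrix

section

variable {n₁ n₂ : ℕ}

theorem frobSq_eq_trace (A : Matrix (Fin n₁) (Fin n₂) ℝ) : frobSq A = trace (Aᵀ * A) := by
  simp only [frobSq, trace, diag, mul_apply, transpose_apply, sq]
  exact Finset.sum_comm

theorem frobSq_add (A B : Matrix (Fin n₁) (Fin n₂) ℝ) :
    frobSq (A + B) = frobSq A + 2 * trace (Aᵀ * B) + frobSq B := by
  have hBA : trace (Bᵀ * A) = trace (Aᵀ * B) := by
    rw [← trace_transpose, transpose_mul, transpose_transpose]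
  simp only [frobSq_eq_trace, transpose_add, Matrix.add_mul, Matrix.mul_add, trace_add, hBA]
  ring

theorem frobSq_pos {A : Matrix (Fin n₁) (Fin n₂) ℝ} (hA : A ≠ 0) : 0 < frobSq A := by
  rw [frobSq_eq_trace, ← conjTranspose_eq_transpose_of_trivial]
  exact (posSemidef_conjTranspose_mul_self A).trace_nonneg.lt_of_ne
    (Ne.symm (trace_conjTranspose_mul_self_eq_zero_iff.not.mpr hA))

theorem nuclearNorm_nonneg (X : Matrix (Fin n₁) (Fin n₂) ℝ) : 0 ≤ nuclearNorm X :=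
  Finset.sum_nonneg fun _ _ => Real.sqrt_nonneg _

theorem nuclearNorm_eq_trace_sqrt (X : Matrix (Fin n₁) (Fin n₂) ℝ) :
    nuclearNorm X = trace (CFC.sqrt (Xᵀ * X)) := by
  have hX : 0 ≤ Xᵀ * X := (posSemidef_conjTranspose_mul_self X).nonneg
  rw [CFC.sqrt_eq_real_sqrt _ hX, cfcₙ_eq_cfc, ← conjTranspose_eq_transpose_of_trivial,
    (isHermitian_conjTranspose_mul_self X).trace_cfc]
  rfl

theorem nuclearNorm_mul_diagonal_mul_transpose {k : ℕ} {U : Matrix (Fin n₁) (Fin k) ℝ}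
    {V : Matrix (Fin n₂) (Fin k) ℝ} (hU : Uᵀ * U = 1) (hV : Vᵀ * V = 1) {d : Fin k → ℝ}
    (hd : 0 ≤ d) : nuclearNorm (U * diagonal d * Vᵀ) = ∑ i, d i := by
  set B := V * diagonal d * Vᵀ
  have hB : 0 ≤ B := by
    simpa [B] using ((posSemidef_diagonal_iff.mpr hd).mul_mul_conjTranspose_same V).nonneg
  have hsq : (U * diagonal d * Vᵀ)ᵀ * (U * diagonal d * Vᵀ) = B * B := by
    simp only [B, transpose_mul, transpose_transpose, diagonal_transpose, Matrix.mul_assoc]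
    rw [← Matrix.mul_assoc Uᵀ, hU, Matrix.one_mul, ← Matrix.mul_assoc Vᵀ, hV, Matrix.one_mul]
  rw [nuclearNorm_eq_trace_sqrt, hsq, CFC.sqrt_mul_self B hB, trace_mul_cycle, hV,
    Matrix.one_mul, trace_diagonal]

theorem singularValues_eq_norm_mulVec_eigenvectorBasis (X : Matrix (Fin n₁) (Fin n₂) ℝ)
    (i : Fin n₂) : singularValues X i = ‖(EuclideanSpace.equiv _ ℝ).symm
      (X *ᵥ (isHermitian_conjTranspose_mul_self X).eigenvectorBasis i)‖ := by
  set hA := isHermitian_conjTranspose_mul_self X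
  rw [norm_eq_sqrt_real_inner, singularValues]
  congr 1
  rw [hA.eigenvalues_eq, RCLike.re_to_real, star_trivial, ← mulVec_mulVec, dotProduct_mulVec]
  simp only [conjTranspose_eq_transpose_of_trivial, vecMul_transpose]
  rfl

theorem trace_transpose_mul_le_norm_mul_nuclearNorm (X G : Matrix (Fin n₁) (Fin n₂) ℝ) :
    trace (Xᵀ * G) ≤ ‖G‖ * nuclearNorm X := by
  set b := (isHermitian_conjTranspose_mul_self X).eigenvectorBasis
  have htrace : trace (Xᵀ * G) = ∑ i, (X *ᵥ b i) ⬝ᵥ (G *ᵥ b i) := by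
    rw [← trace_toLin_eq _ (EuclideanSpace.basisFun _ ℝ).toBasis,
      ← toEuclideanLin_eq_toLin_orthonormal, LinearMap.trace_eq_sum_inner _ b]
    refine Finset.sum_congr rfl fun i _ => ?_
    rw [toLpLin_apply, EuclideanSpace.inner_toLp_toLp, star_trivial, ← mulVec_mulVec,
      dotProduct_comm, dotProduct_mulVec, vecMul_transpose]
  rw [htrace, nuclearNorm, Finset.mul_sum]
  refine Finset.sum_le_sum fun i _ => ?_
  calc (X *ᵥ b i) ⬝ᵥ (G *ᵥ b i)
      = ⟪(EuclideanSpace.equiv _ ℝ).symm (X *ᵥ b i),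
          (EuclideanSpace.equiv _ ℝ).symm (G *ᵥ b i)⟫ := by
        rw [dotProduct_comm]; rfl
    _ ≤ ‖(EuclideanSpace.equiv _ ℝ).symm (X *ᵥ b i)‖ *
          ‖(EuclideanSpace.equiv _ ℝ).symm (G *ᵥ b i)‖ := real_inner_le_norm _ _
    _ ≤ singularValues X i * (‖G‖ * ‖b i‖) := by
        rw [singularValues_eq_norm_mulVec_eigenvectorBasis]
        exact mul_le_mul_of_nonneg_left (l2_opNorm_mulVec G (b i)) (norm_nonneg _)
    _ = ‖G‖ * singularValues X i := by rw [b.orthonormal.1 i]; ring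

theorem objective_lt_of_subgradient {τ : ℝ} {Z D X : Matrix (Fin n₁) (Fin n₂) ℝ}
    (hnorm : ‖Z - D‖ ≤ τ) (htrace : trace (Dᵀ * (Z - D)) = τ * nuclearNorm D) (hX : X ≠ D) :
    τ * nuclearNorm D + (1 / 2) * frobSq (D - Z) <
      τ * nuclearNorm X + (1 / 2) * frobSq (X - Z) := by
  have hsplit : frobSq (X - Z) =
      frobSq (X - D) + 2 * trace ((X - D)ᵀ * (D - Z)) + frobSq (D - Z) := by
    rw [← frobSq_add, sub_add_sub_cancel]
  have hcross : trace ((X - D)ᵀ * (D - Z)) = trace (Dᵀ * (Z - D)) - trace (Xᵀ * (Z - D)) := by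
    rw [← neg_sub Z D, transpose_sub, Matrix.mul_neg, Matrix.sub_mul, trace_neg, trace_sub]
    ring
  have hdual : trace (Xᵀ * (Z - D)) ≤ τ * nuclearNorm X :=
    (trace_transpose_mul_le_norm_mul_nuclearNorm X _).trans
      (mul_le_mul_of_nonneg_right hnorm (nuclearNorm_nonneg X))
  have hpos : 0 < frobSq (X - D) := frobSq_pos (sub_ne_zero.mpr hX)
  linarith

end

theorem svt_is_unique_minimizer_general (n₁ n₂ k : ℕ) (Z : Matrix (Fin n₁) (Fin n₂) ℝ)
    (U : Matrix (Fin n₁) (Fin k) ℝ) (V : Matrix (Fin n₂) (Fin k) ℝ) (σ : Fin k → ℝ)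
    (hU : Uᵀ * U = 1) (hV : Vᵀ * V = 1)
    (hσpos : ∀ i, 0 < σ i)
    (hZ : Z = U * Matrix.diagonal σ * Vᵀ)
    (τ : ℝ) (hτ : 0 < τ)
    (D : Matrix (Fin n₁) (Fin n₂) ℝ)
    (hD : D = U * Matrix.diagonal (fun i => max (σ i - τ) 0) * Vᵀ) :
    ∀ X : Matrix (Fin n₁) (Fin n₂) ℝ, X ≠ D →
      τ * nuclearNorm D + (1 / 2) * frobSq (D - Z) <
        τ * nuclearNorm X + (1 / 2) * frobSq (X - Z) := by
  intro X hX
  set d : Fin k → ℝ := fun i => max (σ i - τ) 0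
  set m : Fin k → ℝ := fun i => min (σ i) τ
  have hZD : Z - D = U * diagonal m * Vᵀ := by
    rw [hZ, hD, ← Matrix.sub_mul, ← Matrix.mul_sub, diagonal_sub]
    congr 3
    funext i
    rcases le_total (σ i) τ with h | h <;> simp [m, d, h]
  have hm : ‖m‖ ≤ τ := (pi_norm_le_iff_of_nonneg hτ.le).mpr fun i => by
    rw [Real.norm_eq_abs, abs_of_pos (lt_min (hσpos i) hτ)]
    exact min_le_right _ _
  have hnorm : ‖Z - D‖ ≤ τ := by
    rw [hZD, ← conjTranspose_eq_transpose_of_trivial]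
    refine (l2_opNorm_mul_diagonal_mul_conjTranspose_le ?_ ?_ m).trans hm <;>
      rwa [conjTranspose_eq_transpose_of_trivial]
  refine objective_lt_of_subgradient hnorm ?_ hX
  rw [hZD, hD, trace_transpose_mul_of_diagonal_factors hU hV,
    nuclearNorm_mul_diagonal_mul_transpose hU hV (d := d) fun i => le_max_right _ _,
    Finset.mul_sum]
  refine Finset.sum_congr rfl fun i _ => ?_
  rcases le_total (σ i) τ with h | h <;> simp [m, d, h, mul_comm]

/-- Singular value thresholding: `D_τ(Z)` is the unique minimizer of
`X ↦ τ‖X‖_* + (1/2)‖X − Z‖_F²`. -/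
theorem svt_is_unique_minimizer (n₁ n₂ k : ℕ) (Z : Matrix (Fin n₁) (Fin n₂) ℝ)
    (U : Matrix (Fin n₁) (Fin k) ℝ) (V : Matrix (Fin n₂) (Fin k) ℝ) (σ : Fin k → ℝ)
    (hU : Uᵀ * U = 1) (hV : Vᵀ * V = 1)
    (hσpos : ∀ i, 0 < σ i) (hσdec : ∀ i j : Fin k, i ≤ j → σ j ≤ σ i)
    (hk : Z.rank = k) (hZ : Z = U * Matrix.diagonal σ * Vᵀ)
    (τ : ℝ) (hτ : 0 < τ)
    (D : Matrix (Fin n₁) (Fin n₂) ℝ)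
    (hD : D = U * Matrix.diagonal (fun i => max (σ i - τ) 0) * Vᵀ) :
    ∀ X : Matrix (Fin n₁) (Fin n₂) ℝ, X ≠ D →
      τ * nuclearNorm D + (1 / 2) * frobSq (D - Z) <
        τ * nuclearNorm X + (1 / 2) * frobSq (X - Z) :=
  svt_is_unique_minimizer_general n₁ n₂ k Z U V σ hU hV hσpos hZ τ hτ D hD
end

section
/- Let X ∈ ℝ^{n₁×n₂} and t ∈ ℝ. Then ‖X‖_* ≤ t if and only if there exist symmetric matrices W₁ ∈ ℝ^{n₁×n₁} and W₂ ∈ ℝ^{n₂×n₂} such that tr(W₁) + tr(W₂) ≤ 2t and the block matrix [[W₁, X],[Xᵀ, W₂]] ∈ ℝ^{(n₁+n₂)×(n₁+n₂)} is positive semidefinite. -/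
open Matrix

/-! Write `X = U Σ Vᵀ` with `V` orthogonal, `Σ = diag σ ⪰ 0` and `U` a partial isometry
(`U Uᵀ U = U`). Then `W₁ = U Σ Uᵀ`, `W₂ = V Σ Vᵀ` make the block matrix `[U; V] Σ [U; V]ᵀ ⪰ 0`,
and both traces equal `∑ σ`. Conversely, compressing a positive semidefinite block matrix by
`[U; -V]` gives `2 tr (Uᵀ X V) ≤ tr (Uᵀ W₁ U) + tr (Vᵀ W₂ V)`, where `tr (Uᵀ X V) = ∑ σ`,
`tr (Vᵀ W₂ V) = tr W₂`, and `tr (Uᵀ W₁ U) ≤ tr W₁` because `U Uᵀ` is an orthogonal projection. -/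

namespace Matrix

theorem transpose_mul_self_apply_self_eq_zero_iff {m n : Type*} [Fintype m] (A : Matrix m n ℝ)
    (i : n) :
    (Aᵀ * A) i i = 0 ↔ ∀ j, A j i = 0 := by
  change (fun j => A j i) ⬝ᵥ (fun j => A j i) = 0 ↔ _
  rw [dotProduct_self_eq_zero, funext_iff]
  rfl

variable {m n k : Type*} [Fintype m] [Fintype n] [Fintype k]

theorem PosSemidef.two_mul_trace_le_of_fromBlocks {W₁ : Matrix m m ℝ} {W₂ : Matrix n n ℝ}
    {X : Matrix m n ℝ} (hM : (fromBlocks W₁ X Xᵀ W₂).PosSemidef) (A : Matrix m k ℝ)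
    (B : Matrix n k ℝ) :
    2 * (Aᵀ * X * B).trace ≤ (Aᵀ * W₁ * A).trace + (Bᵀ * W₂ * B).trace := by
  have hZ := (hM.conjTranspose_mul_mul_same (fromRows A (-B))).trace_nonneg
  rw [conjTranspose_eq_transpose_of_trivial, transpose_fromRows, fromCols_mul_fromBlocks,
    fromCols_mul_fromRows] at hZ
  have hcross : (Bᵀ * Xᵀ * A).trace = (Aᵀ * X * B).trace := by
    rw [← trace_transpose]
    simp only [transpose_mul, transpose_transpose, Matrix.mul_assoc]
  simp only [transpose_neg, Matrix.neg_mul, Matrix.mul_neg, Matrix.add_mul, trace_add,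
    trace_neg, hcross] at hZ
  linarith

theorem PosSemidef.trace_transpose_mul_mul_le {W : Matrix m m ℝ} (hW : W.PosSemidef)
    {A : Matrix m k ℝ} (hA : A * Aᵀ * A = A) : (Aᵀ * W * A).trace ≤ W.trace := by
  classical
  set Q := 1 - A * Aᵀ
  have hQt : Qᵀ = Q := by simp [Q, transpose_mul]
  have hQQ : Q * Q = Q := by
    simp only [Q, Matrix.sub_mul, Matrix.mul_sub, Matrix.one_mul, Matrix.mul_one,
      ← Matrix.mul_assoc, hA]
    abel
  have h0 := (hW.mul_mul_conjTranspose_same Q).trace_nonneg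
  rw [conjTranspose_eq_transpose_of_trivial, hQt, trace_mul_cycle, hQQ, Matrix.sub_mul,
    Matrix.one_mul, trace_sub, ← trace_mul_cycle] at h0
  linarith

section SingularValueDecomposition

variable [DecidableEq n] (X : Matrix m n ℝ)

noncomputable def rightSingularVectors : Matrix n n ℝ :=
  ((isHermitian_conjTranspose_mul_self X).eigenvectorUnitary : Matrix n n ℝ)

noncomputable def singularValue (i : n) : ℝ :=
  √((isHermitian_conjTranspose_mul_self X).eigenvalues i)

/-- Columns belonging to a zero singular value are zero, because `(0 : ℝ)⁻¹ = 0`. -/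
noncomputable def leftSingularVectors : Matrix m n ℝ :=
  X * rightSingularVectors X * diagonal (singularValue X)⁻¹

theorem singularValue_nonneg (i : n) : 0 ≤ singularValue X i := Real.sqrt_nonneg _

theorem rightSingularVectors_mul_transpose :
    rightSingularVectors X * (rightSingularVectors X)ᵀ = 1 := by
  rw [← conjTranspose_eq_transpose_of_trivial]
  exact mem_unitaryGroup_iff.mp (isHermitian_conjTranspose_mul_self X).eigenvectorUnitary.2

theorem transpose_mul_rightSingularVectors :
    (rightSingularVectors X)ᵀ * rightSingularVectors X = 1 := by
  rw [← conjTranspose_eq_transpose_of_trivial]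
  exact mem_unitaryGroup_iff'.mp (isHermitian_conjTranspose_mul_self X).eigenvectorUnitary.2

theorem transpose_mul_self_mul_rightSingularVectors :
    (X * rightSingularVectors X)ᵀ * (X * rightSingularVectors X) =
      diagonal (fun i => singularValue X i ^ 2) := by
  have hdiag := (isHermitian_conjTranspose_mul_self X).conjStarAlgAut_star_eigenvectorUnitary
  rw [Unitary.conjStarAlgAut_star_apply] at hdiag
  have hnonneg := (posSemidef_conjTranspose_mul_self X).eigenvalues_nonneg
  simp only [singularValue, Real.sq_sqrt (hnonneg _)]
  rw [transpose_mul, Matrix.mul_assoc, ← Matrix.mul_assoc Xᵀ, ← Matrix.mul_assoc]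
  exact hdiag

theorem leftSingularVectors_mul_diagonal :
    leftSingularVectors X * diagonal (singularValue X) = X * rightSingularVectors X := by
  ext j i
  rw [leftSingularVectors, Matrix.mul_assoc, diagonal_mul_diagonal, mul_diagonal]
  by_cases hσ : singularValue X i = 0
  · have hcol : ((X * rightSingularVectors X)ᵀ * (X * rightSingularVectors X)) i i = 0 := by
      rw [transpose_mul_self_mul_rightSingularVectors, diagonal_apply_eq, hσ, sq, zero_mul]
    rw [(transpose_mul_self_apply_self_eq_zero_iff _ i).mp hcol j, zero_mul]
  · rw [Pi.inv_apply, inv_mul_cancel₀ hσ, mul_one]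

theorem leftSingularVectors_mul_diagonal_mul_transpose :
    leftSingularVectors X * diagonal (singularValue X) * (rightSingularVectors X)ᵀ = X := by
  rw [leftSingularVectors_mul_diagonal, Matrix.mul_assoc, rightSingularVectors_mul_transpose,
    Matrix.mul_one]

theorem transpose_leftSingularVectors_mul_mul :
    (leftSingularVectors X)ᵀ * X * rightSingularVectors X = diagonal (singularValue X) := by
  rw [leftSingularVectors, transpose_mul, diagonal_transpose, Matrix.mul_assoc, Matrix.mul_assoc,
    transpose_mul_self_mul_rightSingularVectors, diagonal_mul_diagonal]
  congr 1
  ext i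
  simp [sq, ← mul_assoc]

theorem leftSingularVectors_mul_transpose_mul_self :
    leftSingularVectors X * (leftSingularVectors X)ᵀ * leftSingularVectors X =
      leftSingularVectors X := by
  set U := leftSingularVectors X
  have hUU : Uᵀ * U = diagonal (singularValue X) * diagonal (singularValue X)⁻¹ := by
    rw [← transpose_leftSingularVectors_mul_mul]
    simp only [U, leftSingularVectors, Matrix.mul_assoc]
  rw [Matrix.mul_assoc, hUU]
  simp only [U, leftSingularVectors, Matrix.mul_assoc, diagonal_mul_diagonal]
  congr 3
  ext i
  simpa [mul_assoc] using mul_inv_mul_cancel (singularValue X i)⁻¹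

theorem posSemidef_fromBlocks_singularVectors :
    (fromBlocks
      (leftSingularVectors X * diagonal (singularValue X) * (leftSingularVectors X)ᵀ) X Xᵀ
      (rightSingularVectors X * diagonal (singularValue X) * (rightSingularVectors X)ᵀ)
      ).PosSemidef := by
  set U := leftSingularVectors X
  set V := rightSingularVectors X
  set D := diagonal (singularValue X)
  have hX : U * D * Vᵀ = X := leftSingularVectors_mul_diagonal_mul_transpose X
  have hXt : V * D * Uᵀ = Xᵀ := by
    conv_rhs => rw [← hX]
    simp only [D, transpose_mul, diagonal_transpose, transpose_transpose, Matrix.mul_assoc]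
  have hblocks :
      fromBlocks (U * D * Uᵀ) X Xᵀ (V * D * Vᵀ) = fromRows U V * D * (fromRows U V)ᵀ := by
    rw [transpose_fromRows, fromRows_mul, fromRows_mul_fromCols, hX, hXt]
  rw [hblocks, ← conjTranspose_eq_transpose_of_trivial]
  exact (posSemidef_diagonal_iff.mpr (singularValue_nonneg X)).mul_mul_conjTranspose_same _

theorem trace_leftSingularVectors_mul_diagonal_mul_transpose :
    (leftSingularVectors X * diagonal (singularValue X) * (leftSingularVectors X)ᵀ).trace =
      ∑ i, singularValue X i := by
  rw [trace_mul_cycle, Matrix.mul_assoc, leftSingularVectors_mul_diagonal, ← Matrix.mul_assoc,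
    transpose_leftSingularVectors_mul_mul, trace_diagonal]

theorem trace_rightSingularVectors_mul_diagonal_mul_transpose :
    (rightSingularVectors X * diagonal (singularValue X) * (rightSingularVectors X)ᵀ).trace =
      ∑ i, singularValue X i := by
  rw [trace_mul_cycle, transpose_mul_rightSingularVectors, Matrix.one_mul, trace_diagonal]

theorem PosSemidef.two_mul_sum_singularValue_le {W₁ : Matrix m m ℝ} {W₂ : Matrix n n ℝ}
    (hM : (fromBlocks W₁ X Xᵀ W₂).PosSemidef) :
    2 * ∑ i, singularValue X i ≤ W₁.trace + W₂.trace := by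
  have hW₁ : W₁.PosSemidef := toBlocks_fromBlocks₁₁ W₁ X Xᵀ W₂ ▸ hM.submatrix Sum.inl
  have hU := hW₁.trace_transpose_mul_mul_le (leftSingularVectors_mul_transpose_mul_self X)
  have hV : ((rightSingularVectors X)ᵀ * W₂ * rightSingularVectors X).trace = W₂.trace := by
    rw [trace_mul_cycle, rightSingularVectors_mul_transpose, Matrix.one_mul]
  have h := hM.two_mul_trace_le_of_fromBlocks (leftSingularVectors X) (rightSingularVectors X)
  rw [transpose_leftSingularVectors_mul_mul, trace_diagonal] at h
  linarith

end SingularValueDecomposition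

end Matrix

/-- `‖X‖_* ≤ t` iff there exist symmetric `W₁, W₂` with `tr W₁ + tr W₂ ≤ 2t` and
`[[W₁, X], [Xᵀ, W₂]] ⪰ 0`. -/
theorem nuclearNorm_le_iff_sdp (n₁ n₂ : ℕ) (X : Matrix (Fin n₁) (Fin n₂) ℝ) (t : ℝ) :
    nuclearNorm X ≤ t ↔
      ∃ (W₁ : Matrix (Fin n₁) (Fin n₁) ℝ) (W₂ : Matrix (Fin n₂) (Fin n₂) ℝ),
        W₁.IsSymm ∧ W₂.IsSymm ∧ W₁.trace + W₂.trace ≤ 2 * t ∧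
        (Matrix.fromBlocks W₁ X Xᵀ W₂).PosSemidef := by
  have hnuc : nuclearNorm X = ∑ i, singularValue X i := rfl
  constructor
  · intro ht
    refine ⟨_, _, ?_, ?_, ?_, posSemidef_fromBlocks_singularVectors X⟩
    · simp [IsSymm, transpose_mul, Matrix.mul_assoc]
    · simp [IsSymm, transpose_mul, Matrix.mul_assoc]
    · rw [trace_leftSingularVectors_mul_diagonal_mul_transpose,
        trace_rightSingularVectors_mul_diagonal_mul_transpose, ← hnuc]
      linarith
  · rintro ⟨W₁, W₂, -, -, htrace, hM⟩
    linarith [hM.two_mul_sum_singularValue_le X]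
end

section
/- For every X ∈ ℝ^{n₁×n₂}, the set S = { (W₁, W₂) : W₁ ∈ ℝ^{n₁×n₁} symmetric, W₂ ∈ ℝ^{n₂×n₂} symmetric, [[W₁, X],[Xᵀ, W₂]] ⪰ 0 } is nonempty, and ‖X‖_* = (1/2)·inf { tr(W₁) + tr(W₂) : (W₁, W₂) ∈ S }, with the infimum attained. -/
/-!
Write `X = U Σ Vᵀ` with `Σ = diag σ`, `V` orthogonal and `U` a partial isometry that is isometric
on the support of `σ`. Testing the block matrix against `[U; -V]` gives
`tr W₁ + tr W₂ ≥ tr (Uᵀ W₁ U) + tr (Vᵀ W₂ V) ≥ 2 tr (Uᵀ X V) = 2 ‖X‖_*`, the first step because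
`U Uᵀ` and `V Vᵀ` are orthogonal projections. Conversely `W₁ = U Σ Uᵀ`, `W₂ = V Σ Vᵀ` makes the
block matrix the Gram matrix of the columns of `[Σ^{1/2} Uᵀ, Σ^{1/2} Vᵀ]`, and attains `2 ‖X‖_*`.
-/

open Matrix

namespace Matrix

variable {k m n : Type*} [Fintype m] [Fintype n]

theorem mul_diagonal_eq_of_transpose_mul_self_eq_diagonal [DecidableEq n] {Y : Matrix m n ℝ}
    {d : n → ℝ} (hY : Yᵀ * Y = diagonal d) {f g : n → ℝ} (hfg : ∀ i, d i ≠ 0 → f i = g i) :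
    Y * diagonal f = Y * diagonal g := by
  ext j i
  rw [mul_diagonal, mul_diagonal]
  by_cases hi : d i = 0
  · have hcol : (fun k => Y k i) = 0 := by
      rw [← dotProduct_self_eq_zero, ← hi]
      simpa [mul_apply, dotProduct] using congrFun (congrFun hY i) i
    simp [congrFun hcol j]
  · rw [hfg i hi]

theorem trace_transpose_mul_mul_le_trace [DecidableEq m] {W : Matrix m m ℝ} (hW : W.PosSemidef)
    {U : Matrix m n ℝ} (hU : U * Uᵀ * U = U) : (Uᵀ * W * U).trace ≤ W.trace := by
  set Q : Matrix m m ℝ := 1 - U * Uᵀ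
  have hQ : Q * Qᵀ = Q := by
    have hP : U * Uᵀ * (U * Uᵀ) = U * Uᵀ := by rw [← Matrix.mul_assoc, hU]
    simp [Q, transpose_mul, sub_mul, mul_sub, hP]
  have hnonneg : 0 ≤ (Qᵀ * W * Q).trace := by
    simpa [conjTranspose_eq_transpose_of_trivial] using
      (hW.conjTranspose_mul_mul_same Q).trace_nonneg
  have hdiff : (Qᵀ * W * Q).trace = W.trace - (Uᵀ * W * U).trace := by
    rw [trace_mul_cycle, hQ, sub_mul, one_mul, trace_sub, Matrix.mul_assoc, trace_mul_comm U]
  linarith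

theorem two_mul_trace_le_of_posSemidef_fromBlocks [Fintype k] {A : Matrix m m ℝ}
    {B : Matrix m n ℝ} {D : Matrix n n ℝ} (h : (fromBlocks A B Bᵀ D).PosSemidef)
    (U : Matrix m k ℝ) (V : Matrix n k ℝ) :
    2 * (Uᵀ * B * V).trace ≤ (Uᵀ * A * U).trace + (Vᵀ * D * V).trace := by
  have hN := (h.conjTranspose_mul_mul_same (fromRows U (-V))).trace_nonneg
  rw [conjTranspose_eq_transpose_of_trivial, transpose_fromRows, Matrix.mul_assoc,
    fromBlocks_mul_fromRows, fromCols_mul_fromRows] at hN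
  have hsymm : (Vᵀ * Bᵀ * U).trace = (Uᵀ * B * V).trace := by
    rw [← trace_transpose]
    simp [transpose_mul, Matrix.mul_assoc]
  simp only [transpose_neg, Matrix.mul_neg, Matrix.neg_mul, Matrix.mul_add, neg_neg,
    trace_add, trace_neg, ← Matrix.mul_assoc] at hN
  linarith

theorem posSemidef_fromBlocks_transpose_mul [Fintype k] (M₁ : Matrix k m ℝ) (M₂ : Matrix k n ℝ) :
    (fromBlocks (M₁ᵀ * M₁) (M₁ᵀ * M₂) (M₁ᵀ * M₂)ᵀ (M₂ᵀ * M₂)).PosSemidef := by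
  rw [transpose_mul, transpose_transpose]
  simpa [conjTranspose_eq_transpose_of_trivial, transpose_fromCols, fromRows_mul_fromCols] using
    posSemidef_conjTranspose_mul_self (fromCols M₁ M₂)

end Matrix

variable {n₁ n₂ : ℕ}

theorem trace_diagonal_singularValues (X : Matrix (Fin n₁) (Fin n₂) ℝ) :
    (diagonal (singularValues X)).trace = nuclearNorm X :=
  trace_diagonal _

theorem exists_orthogonal_diagonalizing_transpose_mul_self (X : Matrix (Fin n₁) (Fin n₂) ℝ) :
    ∃ V : Matrix (Fin n₂) (Fin n₂) ℝ, Vᵀ * V = 1 ∧ V * Vᵀ = 1 ∧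
      (X * V)ᵀ * (X * V) = diagonal (fun i => singularValues X i ^ 2) := by
  have hA := isHermitian_conjTranspose_mul_self X
  set V : Matrix (Fin n₂) (Fin n₂) ℝ := (hA.eigenvectorUnitary : Matrix (Fin n₂) (Fin n₂) ℝ)
  have hV := hA.eigenvectorUnitary.2
  refine ⟨V, ?_, ?_, ?_⟩
  · simpa [V, star_eq_conjTranspose] using (mem_unitaryGroup_iff').mp hV
  · simpa [V, star_eq_conjTranspose] using (mem_unitaryGroup_iff).mp hV
  · have hdiag := hA.conjStarAlgAut_star_eigenvectorUnitary
    rw [Unitary.conjStarAlgAut_star_apply, star_eq_conjTranspose] at hdiag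
    simp only [conjTranspose_eq_transpose_of_trivial] at hdiag
    rw [transpose_mul, Matrix.mul_assoc, ← Matrix.mul_assoc Xᵀ, ← Matrix.mul_assoc]
    refine hdiag.trans (congrArg diagonal ?_)
    funext i
    exact (Real.sq_sqrt ((posSemidef_conjTranspose_mul_self X).eigenvalues_nonneg i)).symm

theorem exists_svd (X : Matrix (Fin n₁) (Fin n₂) ℝ) :
    ∃ (U : Matrix (Fin n₁) (Fin n₂) ℝ) (V : Matrix (Fin n₂) (Fin n₂) ℝ), Vᵀ * V = 1 ∧
      U * Uᵀ * U = U ∧ Uᵀ * U * diagonal (singularValues X) = diagonal (singularValues X) ∧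
      U * diagonal (singularValues X) * Vᵀ = X := by
  obtain ⟨V, hVV, hVV', hY⟩ := exists_orthogonal_diagonalizing_transpose_mul_self X
  set σ := singularValues X
  have hcol (f g : Fin n₂ → ℝ) (hfg : ∀ i, σ i ≠ 0 → f i = g i) :
      X * V * diagonal f = X * V * diagonal g :=
    mul_diagonal_eq_of_transpose_mul_self_eq_diagonal hY fun i hi =>
      hfg i ((pow_ne_zero_iff two_ne_zero).mp hi)
  -- `(σ i)⁻¹ = 0` when `σ i = 0`, so the columns of `U` off the support of `σ` are zero.
  set U := X * V * diagonal (fun i => (σ i)⁻¹)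
  have hUU : Uᵀ * U = diagonal (fun i => (σ i)⁻¹ * σ i ^ 2 * (σ i)⁻¹) := by
    calc Uᵀ * U = diagonal (fun i => (σ i)⁻¹) * ((X * V)ᵀ * (X * V)) *
          diagonal (fun i => (σ i)⁻¹) := by
          simp only [U, transpose_mul, diagonal_transpose, Matrix.mul_assoc]
      _ = _ := by rw [hY, diagonal_mul_diagonal, diagonal_mul_diagonal]
  refine ⟨U, V, hVV, ?_, ?_, ?_⟩
  · rw [Matrix.mul_assoc, hUU, Matrix.mul_assoc, diagonal_mul_diagonal]
    refine hcol _ _ fun i hi => ?_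
    field_simp
  · rw [hUU, diagonal_mul_diagonal]
    refine congrArg diagonal (funext fun i => ?_)
    rcases eq_or_ne (σ i) 0 with h | h
    · simp [h]
    · field_simp
  · rw [Matrix.mul_assoc (X * V), diagonal_mul_diagonal,
      hcol _ (fun _ => 1) fun i => inv_mul_cancel₀,
      diagonal_one, Matrix.mul_one, Matrix.mul_assoc, hVV', Matrix.mul_one]

theorem two_mul_nuclearNorm_le_trace_add_trace {X : Matrix (Fin n₁) (Fin n₂) ℝ}
    {W₁ : Matrix (Fin n₁) (Fin n₁) ℝ} {W₂ : Matrix (Fin n₂) (Fin n₂) ℝ}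
    (h : (fromBlocks W₁ X Xᵀ W₂).PosSemidef) :
    2 * nuclearNorm X ≤ W₁.trace + W₂.trace := by
  obtain ⟨U, V, hVV, hUUU, hUUσ, hX⟩ := exists_svd X
  have hUXV : Uᵀ * X * V = diagonal (singularValues X) := by
    conv_lhs => rw [← hX]
    rw [Matrix.mul_assoc, Matrix.mul_assoc, hVV, Matrix.mul_one, ← Matrix.mul_assoc, hUUσ]
  have hW₁ : W₁.PosSemidef := h.submatrix Sum.inl
  have hW₂ : W₂.PosSemidef := h.submatrix Sum.inr
  have hVVV : V * Vᵀ * V = V := by rw [Matrix.mul_assoc, hVV, Matrix.mul_one]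
  calc 2 * nuclearNorm X = 2 * (Uᵀ * X * V).trace := by
        rw [hUXV, trace_diagonal_singularValues]
    _ ≤ (Uᵀ * W₁ * U).trace + (Vᵀ * W₂ * V).trace :=
        two_mul_trace_le_of_posSemidef_fromBlocks h U V
    _ ≤ W₁.trace + W₂.trace :=
        add_le_add (trace_transpose_mul_mul_le_trace hW₁ hUUU)
          (trace_transpose_mul_mul_le_trace hW₂ hVVV)

theorem exists_posSemidef_fromBlocks_trace_add_trace_eq (X : Matrix (Fin n₁) (Fin n₂) ℝ) :
    ∃ (W₁ : Matrix (Fin n₁) (Fin n₁) ℝ) (W₂ : Matrix (Fin n₂) (Fin n₂) ℝ),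
      W₁.IsSymm ∧ W₂.IsSymm ∧ (fromBlocks W₁ X Xᵀ W₂).PosSemidef ∧
      W₁.trace + W₂.trace = 2 * nuclearNorm X := by
  obtain ⟨U, V, hVV, -, hUUσ, hX⟩ := exists_svd X
  set D := diagonal (fun i => √(singularValues X i))
  have hDD : D * D = diagonal (singularValues X) := by
    rw [diagonal_mul_diagonal]
    exact congrArg diagonal (funext fun i => Real.mul_self_sqrt (Real.sqrt_nonneg _))
  have hM : (D * Uᵀ)ᵀ * (D * Vᵀ) = X := by
    rw [transpose_mul, diagonal_transpose, transpose_transpose, Matrix.mul_assoc,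
      ← Matrix.mul_assoc D, hDD, ← Matrix.mul_assoc, hX]
  have htr₁ : ((D * Uᵀ)ᵀ * (D * Uᵀ)).trace = nuclearNorm X := by
    rw [trace_mul_comm, transpose_mul, diagonal_transpose, transpose_transpose, Matrix.mul_assoc,
      ← Matrix.mul_assoc Uᵀ, trace_mul_comm, Matrix.mul_assoc, hDD, hUUσ,
      trace_diagonal_singularValues]
  have htr₂ : ((D * Vᵀ)ᵀ * (D * Vᵀ)).trace = nuclearNorm X := by
    rw [trace_mul_comm, transpose_mul, diagonal_transpose, transpose_transpose, Matrix.mul_assoc,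
      ← Matrix.mul_assoc Vᵀ, hVV, Matrix.one_mul, hDD, trace_diagonal_singularValues]
  refine ⟨(D * Uᵀ)ᵀ * (D * Uᵀ), (D * Vᵀ)ᵀ * (D * Vᵀ), ?_, ?_, ?_, ?_⟩
  · rw [IsSymm, transpose_mul, transpose_transpose]
  · rw [IsSymm, transpose_mul, transpose_transpose]
  · simpa only [hM] using posSemidef_fromBlocks_transpose_mul (D * Uᵀ) (D * Vᵀ)
  · rw [htr₁, htr₂, two_mul]

/-- The set of pairs of symmetric matrices `(W₁, W₂)` with `[[W₁, X],[Xᵀ, W₂]] ⪰ 0`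
is nonempty and `‖X‖_* = (1/2)·inf { tr W₁ + tr W₂ }`, the infimum being attained. -/
theorem nuclearNorm_eq_half_inf_traces (n₁ n₂ : ℕ) (X : Matrix (Fin n₁) (Fin n₂) ℝ) :
    (∃ (W₁ : Matrix (Fin n₁) (Fin n₁) ℝ) (W₂ : Matrix (Fin n₂) (Fin n₂) ℝ),
        W₁.IsSymm ∧ W₂.IsSymm ∧ (Matrix.fromBlocks W₁ X Xᵀ W₂).PosSemidef) ∧
    ∃ m : ℝ,
      IsLeast { s : ℝ | ∃ (W₁ : Matrix (Fin n₁) (Fin n₁) ℝ) (W₂ : Matrix (Fin n₂) (Fin n₂) ℝ),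
          W₁.IsSymm ∧ W₂.IsSymm ∧ (Matrix.fromBlocks W₁ X Xᵀ W₂).PosSemidef ∧
          s = W₁.trace + W₂.trace } m ∧
      nuclearNorm X = (1 / 2) * m := by
  obtain ⟨W₁, W₂, hW₁, hW₂, hpsd, htr⟩ := exists_posSemidef_fromBlocks_trace_add_trace_eq X
  refine ⟨⟨W₁, W₂, hW₁, hW₂, hpsd⟩, 2 * nuclearNorm X, ⟨⟨W₁, W₂, hW₁, hW₂, hpsd, htr.symm⟩, ?_⟩,
    by ring⟩
  rintro _ ⟨A₁, A₂, -, -, hA, rfl⟩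
  exact two_mul_nuclearNorm_le_trace_add_trace hA
end

section
/- Let D ∈ ℝ^{n×n} be symmetric with zero diagonal (d_{ii} = 0 for all i), let h = (1,…,1)ᵀ ∈ ℝⁿ, and let J = I_n − (1/n)hhᵀ. Then there exist a positive integer k and points z₁, …, z_n ∈ ℝ^k with d_{ij} = ‖z_i − z_j‖₂² for all i, j if and only if JDJ ⪯ 0, i.e., −JDJ is positive semidefinite. -/
/-!
For `∑ y = 0` the identity `yᵀ D y = -2 ∑ₗ (∑ᵢ yᵢ zᵢₗ)²` shows that a matrix of squared distances
is nonpositive on the hyperplane `∑ y = 0`; the centering matrix `J` is a symmetric projection onto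
that hyperplane, so this is exactly `-(J D J) ⪰ 0`. Conversely, factor `-½ J D J = Bᵀ B` and take
the columns of `B` as points: their squared distance is the form of `Bᵀ B` at `eᵢ - eⱼ`, a vector
fixed by `J`, hence equals `-½ (eᵢ - eⱼ)ᵀ D (eᵢ - eⱼ) = dᵢⱼ`. An extra zero coordinate keeps the
dimension positive when `n = 0`.
-/

open Matrix

section SqDist

variable {ι κ : Type*} [Fintype κ]

noncomputable def sqDistMatrix (z : ι → κ → ℝ) : Matrix ι ι ℝ :=
  of fun i j => ∑ l, (z i l - z j l) ^ 2

lemma sqDistMatrix_isSymm (z : ι → κ → ℝ) : (sqDistMatrix z).IsSymm :=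
  IsSymm.ext fun i j => Finset.sum_congr rfl fun l _ => by ring

lemma sqDistMatrix_cons_zero {k : ℕ} (z : ι → Fin k → ℝ) :
    sqDistMatrix (fun i => (Fin.cons 0 (z i) : Fin (k + 1) → ℝ)) = sqDistMatrix z := by
  ext i j
  simp [sqDistMatrix, Fin.sum_univ_succ]

variable [Fintype ι]

lemma sum_sum_mul_mul_sub_sq {y : ι → ℝ} (hy : ∑ i, y i = 0) (a : ι → ℝ) :
    ∑ i, ∑ j, y i * y j * (a i - a j) ^ 2 = -2 * (∑ i, y i * a i) ^ 2 := by
  have expand : ∀ i j, y i * y j * (a i - a j) ^ 2 =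
      y i * a i ^ 2 * y j - 2 * (y i * a i) * (y j * a j) + y i * (y j * a j ^ 2) :=
    fun i j => by ring
  simp only [expand, Finset.sum_add_distrib, Finset.sum_sub_distrib, ← Finset.sum_mul,
    ← Finset.mul_sum, hy]
  ring

lemma dotProduct_sqDistMatrix_mulVec {y : ι → ℝ} (hy : ∑ i, y i = 0) (z : ι → κ → ℝ) :
    y ⬝ᵥ sqDistMatrix z *ᵥ y = -2 * ∑ l, (∑ i, y i * z i l) ^ 2 := by
  calc y ⬝ᵥ sqDistMatrix z *ᵥ y = ∑ i, ∑ j, ∑ l, y i * y j * (z i l - z j l) ^ 2 := by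
        simp only [dotProduct, mulVec, sqDistMatrix, of_apply, Finset.mul_sum, Finset.sum_mul]
        exact Finset.sum_congr rfl fun i _ => Finset.sum_congr rfl fun j _ =>
          Finset.sum_congr rfl fun l _ => by ring
    _ = ∑ l, ∑ i, ∑ j, y i * y j * (z i l - z j l) ^ 2 :=
        (Finset.sum_congr rfl fun _ _ => Finset.sum_comm).trans Finset.sum_comm
    _ = -2 * ∑ l, (∑ i, y i * z i l) ^ 2 := by
        simp only [sum_sum_mul_mul_sub_sq hy, Finset.mul_sum]

lemma dotProduct_sqDistMatrix_mulVec_nonpos {y : ι → ℝ} (hy : ∑ i, y i = 0)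
    (z : ι → κ → ℝ) : y ⬝ᵥ sqDistMatrix z *ᵥ y ≤ 0 := by
  rw [dotProduct_sqDistMatrix_mulVec hy]
  have : 0 ≤ ∑ l, (∑ i, y i * z i l) ^ 2 := by positivity
  linarith

variable [DecidableEq ι]

lemma dotProduct_mulVec_single_sub_single {R : Type*} [CommRing R] (A : Matrix ι ι R) (i j : ι) :
    (Pi.single i 1 - Pi.single j 1) ⬝ᵥ A *ᵥ (Pi.single i 1 - Pi.single j 1) =
      A i i + A j j - A i j - A j i := by
  simp only [mulVec_sub, sub_dotProduct, dotProduct_sub, mulVec_single_one, single_one_dotProduct,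
    col_apply]
  ring

lemma sqDistMatrix_apply_eq_dotProduct_mul_transpose_mulVec (z : ι → κ → ℝ) (i j : ι) :
    sqDistMatrix z i j =
      (Pi.single i 1 - Pi.single j 1) ⬝ᵥ (of z * (of z)ᵀ) *ᵥ (Pi.single i 1 - Pi.single j 1) := by
  rw [dotProduct_mulVec_single_sub_single]
  simp only [sqDistMatrix, of_apply, mul_apply, transpose_apply, ← Finset.sum_add_distrib,
    ← Finset.sum_sub_distrib]
  exact Finset.sum_congr rfl fun l _ => by ring

end SqDist

section Centering

variable (ι : Type*) [Fintype ι] [DecidableEq ι]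

noncomputable def centeringMatrix : Matrix ι ι ℝ :=
  1 - (Fintype.card ι : ℝ)⁻¹ • vecMulVec 1 1

variable {ι}

lemma centeringMatrix_isSymm : (centeringMatrix ι).IsSymm := by
  rw [IsSymm, centeringMatrix, transpose_sub, transpose_one, transpose_smul, transpose_vecMulVec]

lemma centeringMatrix_mulVec (x : ι → ℝ) :
    centeringMatrix ι *ᵥ x = x - fun _ => (Fintype.card ι : ℝ)⁻¹ * ∑ i, x i := by
  ext i
  simp only [centeringMatrix, sub_mulVec, one_mulVec, smul_mulVec, vecMulVec_mulVec,
    one_dotProduct]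
  simp

lemma sum_centeringMatrix_mulVec (x : ι → ℝ) : ∑ i, (centeringMatrix ι *ᵥ x) i = 0 := by
  rcases isEmpty_or_nonempty ι with _ | _
  · simp
  · simp [centeringMatrix_mulVec, Finset.sum_sub_distrib]

lemma centeringMatrix_mulVec_of_sum_eq_zero {y : ι → ℝ} (hy : ∑ i, y i = 0) :
    centeringMatrix ι *ᵥ y = y := by
  rw [centeringMatrix_mulVec, hy, mul_zero]
  exact sub_zero y

lemma dotProduct_centeringMatrix_mul_mul_centeringMatrix_mulVec (A : Matrix ι ι ℝ) (x : ι → ℝ) :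
    x ⬝ᵥ (centeringMatrix ι * A * centeringMatrix ι) *ᵥ x =
      (centeringMatrix ι *ᵥ x) ⬝ᵥ A *ᵥ (centeringMatrix ι *ᵥ x) := by
  rw [← mulVec_mulVec, ← mulVec_mulVec, dotProduct_mulVec, ← mulVec_transpose,
    centeringMatrix_isSymm.eq]

theorem posSemidef_neg_centeringMatrix_mul_mul_iff {A : Matrix ι ι ℝ} (hA : A.IsSymm) :
    (-(centeringMatrix ι * A * centeringMatrix ι)).PosSemidef ↔
      ∀ y : ι → ℝ, ∑ i, y i = 0 → y ⬝ᵥ A *ᵥ y ≤ 0 := by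
  have hsymm : (-(centeringMatrix ι * A * centeringMatrix ι)).IsHermitian := by
    rw [IsHermitian, conjTranspose_eq_transpose_of_trivial, transpose_neg, transpose_mul,
      transpose_mul, centeringMatrix_isSymm.eq, hA.eq, Matrix.mul_assoc]
  simp only [posSemidef_iff_dotProduct_mulVec, hsymm, true_and, star_trivial, neg_mulVec,
    dotProduct_neg, neg_nonneg, dotProduct_centeringMatrix_mul_mul_centeringMatrix_mulVec]
  refine ⟨fun h y hy => ?_, fun h x => h _ (sum_centeringMatrix_mulVec x)⟩
  simpa only [centeringMatrix_mulVec_of_sum_eq_zero hy] using h y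

end Centering

theorem exists_eq_sqDistMatrix_of_posSemidef {ι : Type*} [Fintype ι] [DecidableEq ι]
    {D : Matrix ι ι ℝ} (hD : D.IsSymm) (hdiag : ∀ i, D i i = 0)
    (h : (-(centeringMatrix ι * D * centeringMatrix ι)).PosSemidef) :
    ∃ z : ι → ι → ℝ, D = sqDistMatrix z := by
  obtain ⟨B, hB⟩ : ∃ B : Matrix ι ι ℝ,
      (2 : ℝ)⁻¹ • -(centeringMatrix ι * D * centeringMatrix ι) = star B * B := by
    open scoped MatrixOrder in
    exact CStarAlgebra.nonneg_iff_eq_star_mul_self.mp (h.smul (by norm_num)).nonneg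
  refine ⟨fun i l => B l i, ext fun i j => ?_⟩
  set v : ι → ℝ := Pi.single i 1 - Pi.single j 1
  have hv : ∑ k, v k = 0 := by simp [v, Finset.sum_sub_distrib]
  calc D i j = -2⁻¹ * (v ⬝ᵥ D *ᵥ v) := by
        rw [dotProduct_mulVec_single_sub_single, hdiag, hdiag, hD.apply]
        ring
    _ = v ⬝ᵥ ((2 : ℝ)⁻¹ • -(centeringMatrix ι * D * centeringMatrix ι)) *ᵥ v := by
        rw [smul_mulVec, neg_mulVec, dotProduct_smul, dotProduct_neg,
          dotProduct_centeringMatrix_mul_mul_centeringMatrix_mulVec,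
          centeringMatrix_mulVec_of_sum_eq_zero hv, smul_eq_mul]
        ring
    _ = sqDistMatrix (fun i l => B l i) i j := by
        rw [hB, sqDistMatrix_apply_eq_dotProduct_mul_transpose_mulVec, star_eq_conjTranspose,
          conjTranspose_eq_transpose_of_trivial]
        rfl

/-- Schoenberg's criterion: a symmetric matrix `D` with zero diagonal is a
Euclidean distance matrix (of points in some `ℝ^k`, `k ≥ 1`) if and only if
`J D J ⪯ 0`, where `J = I − (1/n)hhᵀ` and `h` is the all-ones vector. -/
theorem euclideanDistanceMatrix_iff_negSemidef (n : ℕ)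
    (D : Matrix (Fin n) (Fin n) ℝ) (hsymm : D.IsSymm) (hdiag : ∀ i, D i i = 0)
    (J : Matrix (Fin n) (Fin n) ℝ)
    (hJ : J = 1 - (n : ℝ)⁻¹ • Matrix.vecMulVec (fun _ => (1 : ℝ)) (fun _ => (1 : ℝ))) :
    (∃ k : ℕ, 0 < k ∧ ∃ z : Fin n → Fin k → ℝ,
        ∀ i j, D i j = ∑ l, (z i l - z j l) ^ 2) ↔
      (-(J * D * J)).PosSemidef := by
  obtain rfl : J = centeringMatrix (Fin n) := by
    rw [hJ, centeringMatrix, Fintype.card_fin]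
    rfl
  constructor
  · rintro ⟨k, -, z, hz⟩
    obtain rfl : D = sqDistMatrix z := ext hz
    exact (posSemidef_neg_centeringMatrix_mul_mul_iff (sqDistMatrix_isSymm z)).mpr
      fun y hy => dotProduct_sqDistMatrix_mulVec_nonpos hy z
  · intro h
    obtain ⟨z, rfl⟩ := exists_eq_sqDistMatrix_of_posSemidef hsymm hdiag h
    refine ⟨n + 1, n.succ_pos, fun i => Fin.cons 0 (z i), fun i j => ?_⟩
    rw [← sqDistMatrix_cons_zero]
    rfl
end

section
/- Let X ∈ ℝ^{n×n} and let r be a positive integer with r ≤ n. Define the truncated nuclear norm ‖X‖_r = Σ_{i=r+1}^{n} σ_i(X). Then ‖X‖_r = ‖X‖_* − max { tr(UᵀXV) : U ∈ ℝ^{n×r}, V ∈ ℝ^{n×r}, UᵀU = VᵀV = I_r }. -/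
open Matrix

/-- The singular values of `X` arranged in nonincreasing order:
`svDesc X 0 = σ₁(X) ≥ svDesc X 1 = σ₂(X) ≥ …`. -/
noncomputable def svDesc {n₁ n₂ : ℕ} (X : Matrix (Fin n₁) (Fin n₂) ℝ) : Fin n₂ → ℝ :=
  fun i => (singularValues X ∘ Tuple.sort (singularValues X)) i.rev

/-- The truncated nuclear norm `‖X‖_r = Σ_{i=r+1}^{n} σ_i(X)` (the sum of the
`n − r` smallest singular values; indices `i` with `r ≤ i` in 0-based order). -/
noncomputable def truncatedNuclearNorm {n : ℕ} (r : ℕ) (X : Matrix (Fin n) (Fin n) ℝ) : ℝ :=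
  ∑ i ∈ Finset.univ.filter (fun i : Fin n => r ≤ (i : ℕ)), svDesc X i

/-!
Take a singular value decomposition `X = W Σ Vᵀ` with `σ₁ ≥ ⋯ ≥ σₙ ≥ 0`. For `U, U'` with
orthonormal columns, `tr (Uᵀ X U') = ∑ᵢ σᵢ ∑ⱼ Bᵢⱼ Aᵢⱼ` where `B = Wᵀ U` and `A = Vᵀ U'` again have
orthonormal columns. By AM–GM the inner sums are bounded by `dᵢ = (‖Bᵢ‖² + ‖Aᵢ‖²) / 2`; these
weights lie in `[0, 1]` and add up to `r`, and against a nonincreasing sequence such weights give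
at most `σ₁ + ⋯ + σᵣ`. The first `r` singular vector pairs attain this value, so the maximum is
`σ₁ + ⋯ + σᵣ = ‖X‖_* - ‖X‖_r`.
-/

open Finset

namespace Matrix

theorem sum_col_sq_eq_one {m n R : Type*} [Fintype m] [DecidableEq n] [CommSemiring R]
    {A : Matrix m n R} (hA : Aᵀ * A = 1) (j : n) : ∑ i, A i j ^ 2 = 1 := by
  simpa [mul_apply, sq] using congrFun (congrFun hA j) j

theorem sum_row_sq_le_one {m n : Type*} [Fintype m] [Fintype n] [DecidableEq n]
    {A : Matrix m n ℝ} (hA : Aᵀ * A = 1) (i : m) : ∑ j, A i j ^ 2 ≤ 1 := by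
  -- `P = A Aᵀ` is a symmetric idempotent, so `P i i = ∑ k, P i k ^ 2 ≥ P i i ^ 2`.
  set P := A * Aᵀ
  have hP : P * P = P := by rw [Matrix.mul_assoc, ← Matrix.mul_assoc Aᵀ, hA, Matrix.one_mul]
  have hdiag : P i i = ∑ j, A i j ^ 2 := by simp [P, mul_apply, sq]
  have hle : P i i ^ 2 ≤ P i i :=
    calc P i i ^ 2 ≤ ∑ k, P i k ^ 2 :=
          single_le_sum (fun k _ => sq_nonneg (P i k)) (mem_univ i)
      _ = (P * P) i i := by
          simp only [mul_apply, sq, P, transpose_apply]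
          exact sum_congr rfl fun k _ => by
            congr 1; exact sum_congr rfl fun j _ => mul_comm _ _
      _ = P i i := by rw [hP]
  nlinarith

theorem transpose_mul_self_mul_eq_one {m n R : Type*} [Fintype m] [DecidableEq m]
    [DecidableEq n] [CommSemiring R] {Q : Matrix m m R} {A : Matrix m n R}
    (hQ : Qᵀ * Q = 1) (hA : Aᵀ * A = 1) :
    (Q * A)ᵀ * (Q * A) = 1 := by
  rw [transpose_mul, Matrix.mul_assoc, ← Matrix.mul_assoc Qᵀ, hQ, Matrix.one_mul, hA]

theorem trace_transpose_mul_diagonal_mul {m n R : Type*} [Fintype m] [Fintype n] [DecidableEq m]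
    [CommSemiring R] (B A : Matrix m n R) (d : m → R) :
    (Bᵀ * diagonal d * A).trace = ∑ i, d i * ∑ j, B i j * A i j := by
  simp only [trace, diag, mul_apply, transpose_apply, diagonal_apply, mul_ite, mul_zero,
    sum_ite_eq', mem_univ, if_true, mul_sum]
  rw [sum_comm]
  exact sum_congr rfl fun i _ => sum_congr rfl fun j _ => by ring

theorem transpose_submatrix_mul_mul_submatrix {l m n R : Type*} [Fintype m] [Fintype n]
    [CommSemiring R] (U : Matrix m n R) (M : Matrix m m R) (e : l → n) :
    (U.submatrix id e)ᵀ * M * U.submatrix id e = (Uᵀ * M * U).submatrix e e := by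
  rw [submatrix_mul _ _ _ id _ Function.bijective_id,
    submatrix_mul _ _ _ id _ Function.bijective_id, submatrix_id_id, transpose_submatrix]

theorem exists_eq_mul_diagonal_of_transpose_mul_self_eq_diagonal_sq {ι : Type*} [Fintype ι]
    [DecidableEq ι] {Y : Matrix ι ι ℝ} {σ : ι → ℝ} (hY : Yᵀ * Y = diagonal (σ ^ 2)) :
    ∃ W : Matrix ι ι ℝ, Wᵀ * W = 1 ∧ Y = W * diagonal σ := by
  let y : ι → EuclideanSpace ℝ ι := fun i => WithLp.toLp 2 (Yᵀ i)
  have hy : ∀ i j, inner ℝ (y i) (y j) = (Yᵀ * Y) i j := fun i j => by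
    simp [y, EuclideanSpace.inner_toLp_toLp, mul_apply, dotProduct, mul_comm]
  -- The normalized columns `σᵢ⁻¹ yᵢ` with `σᵢ ≠ 0` extend to an orthonormal basis.
  let s : Set ι := {i | σ i ≠ 0}
  have hs : Orthonormal ℝ (s.domRestrict fun i => (σ i)⁻¹ • y i) := by
    rw [orthonormal_iff_ite]
    rintro ⟨i, hi⟩ ⟨j, hj⟩
    simp only [Set.domRestrict_apply, inner_smul_left, inner_smul_right, hy, hY, diagonal_apply,
      Subtype.mk.injEq]
    split_ifs with h
    · subst h
      have hi' : σ i ≠ 0 := hi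
      simp only [Pi.pow_apply, conj_trivial]
      field_simp
    · simp
  obtain ⟨b, hb⟩ := hs.exists_orthonormalBasis_extension_of_card_eq (by simp)
  refine ⟨(EuclideanSpace.basisFun ι ℝ).toBasis.toMatrix b.toBasis, ?_, ?_⟩
  · simpa [mem_orthogonalGroup_iff'] using
      (EuclideanSpace.basisFun ι ℝ).toMatrix_orthonormalBasis_mem_orthogonal b
  · ext k i
    rw [mul_diagonal, Module.Basis.toMatrix_apply]
    simp only [OrthonormalBasis.coe_toBasis]
    by_cases hi : σ i = 0
    · have hyi : y i = 0 := by
        rw [← inner_self_eq_zero (𝕜 := ℝ), hy, hY]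
        simp [hi]
      simpa [hi, y] using congrArg (fun v : EuclideanSpace ℝ ι => v k) hyi
    · rw [hb i hi]
      simp [y]
      field_simp

end Matrix

theorem Finset.sum_mul_le_sum_of_threshold {ι : Type*} [Fintype ι] (s : Finset ι)
    {g d : ι → ℝ} (c : ℝ) (hs : ∀ i ∈ s, c ≤ g i) (hsc : ∀ i ∉ s, g i ≤ c) (hd0 : 0 ≤ d)
    (hd1 : d ≤ 1) (hd : ∑ i, d i = #s) :
    ∑ i, g i * d i ≤ ∑ i ∈ s, g i := by
  classical
  have hterm : ∀ i, 0 ≤ (g i - c) * ((if i ∈ s then 1 else 0) - d i) := by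
    intro i
    split_ifs with hi
    · exact mul_nonneg (sub_nonneg.2 (hs i hi)) (sub_nonneg.2 (hd1 i))
    · exact mul_nonneg_of_nonpos_of_nonpos (sub_nonpos.2 (hsc i hi)) (by simpa using hd0 i)
  have hsum := sum_nonneg fun i (_ : i ∈ univ) => hterm i
  simp only [mul_sub, sub_mul, sum_sub_distrib, mul_ite, mul_one, mul_zero,
    sum_ite_mem, univ_inter, ← mul_sum, sum_const, nsmul_eq_mul, hd] at hsum
  linarith

theorem Fin.sum_mul_le_sum_filter_lt {n r : ℕ} (hrn : r ≤ n) {g d : Fin n → ℝ}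
    (hg : Antitone g) (hd0 : 0 ≤ d) (hd1 : d ≤ 1) (hd : ∑ i, d i = r) :
    ∑ i, g i * d i ≤ ∑ i ∈ univ.filter (fun i : Fin n => (i : ℕ) < r), g i := by
  rcases Nat.eq_zero_or_pos n with rfl | hn
  · simp
  refine sum_mul_le_sum_of_threshold _ (g ⟨r - 1, by omega⟩)
    (fun i hi => hg ?_) (fun i hi => hg ?_) hd0 hd1 ?_
  · simp only [mem_filter, mem_univ, true_and] at hi
    exact Fin.le_def.2 (by dsimp only; omega)
  · simp only [mem_filter, mem_univ, true_and] at hi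
    exact Fin.le_def.2 (by dsimp only; omega)
  · rw [hd, Fin.card_filter_val_lt, min_eq_right hrn]

theorem trace_transpose_mul_diagonal_mul_le {n r : ℕ} (hrn : r ≤ n) {σ : Fin n → ℝ}
    (hσ : Antitone σ) (hσ0 : 0 ≤ σ) {A B : Matrix (Fin n) (Fin r) ℝ}
    (hA : Aᵀ * A = 1) (hB : Bᵀ * B = 1) :
    (Bᵀ * diagonal σ * A).trace ≤ ∑ i ∈ univ.filter (fun i : Fin n => (i : ℕ) < r), σ i := by
  let d : Fin n → ℝ := fun i => (∑ j, B i j ^ 2 + ∑ j, A i j ^ 2) / 2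
  have hd : ∑ i, d i = r := by
    simp only [d, ← sum_div, sum_add_distrib]
    rw [sum_comm, sum_comm (f := fun i j => A i j ^ 2)]
    simp [sum_col_sq_eq_one hA, sum_col_sq_eq_one hB]
  calc (Bᵀ * diagonal σ * A).trace = ∑ i, σ i * ∑ j, B i j * A i j :=
        trace_transpose_mul_diagonal_mul B A σ
    _ ≤ ∑ i, σ i * d i := by
        refine sum_le_sum fun i _ => mul_le_mul_of_nonneg_left ?_ (hσ0 i)
        simp only [d, ← sum_add_distrib, sum_div]
        exact sum_le_sum fun j _ => by nlinarith [sq_nonneg (B i j - A i j)]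
    _ ≤ _ := Fin.sum_mul_le_sum_filter_lt hrn hσ (fun i => by positivity)
        (fun i => show (∑ j, B i j ^ 2 + ∑ j, A i j ^ 2) / 2 ≤ 1 by
          linarith [sum_row_sq_le_one hA i, sum_row_sq_le_one hB i]) hd

theorem exists_trace_transpose_mul_diagonal_mul_eq {n r : ℕ} (hrn : r ≤ n) (σ : Fin n → ℝ) :
    ∃ S : Matrix (Fin n) (Fin r) ℝ, Sᵀ * S = 1 ∧
      (Sᵀ * diagonal σ * S).trace = ∑ i ∈ univ.filter (fun i : Fin n => (i : ℕ) < r), σ i := by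
  have hc := Fin.castLE_injective hrn
  refine ⟨(1 : Matrix (Fin n) (Fin n) ℝ).submatrix id (Fin.castLE hrn), ?_, ?_⟩
  · simpa [submatrix_one _ hc] using
      transpose_submatrix_mul_mul_submatrix (1 : Matrix (Fin n) (Fin n) ℝ) 1 (Fin.castLE hrn)
  · rw [transpose_submatrix_mul_mul_submatrix, transpose_one, Matrix.one_mul, Matrix.mul_one,
      submatrix_diagonal _ _ hc, trace_diagonal]
    have hfilter : univ.map (Fin.castLEEmb hrn) = univ.filter (fun i : Fin n => (i : ℕ) < r) := by
      ext i
      simp only [mem_map, mem_filter, mem_univ, true_and, Fin.castLEEmb_apply]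
      exact ⟨by rintro ⟨j, rfl⟩; exact j.2, fun h => ⟨⟨i, h⟩, rfl⟩⟩
    rw [← hfilter, sum_map]
    rfl

theorem svDesc_nonneg {n₁ n₂ : ℕ} (X : Matrix (Fin n₁) (Fin n₂) ℝ) : 0 ≤ svDesc X :=
  fun _ => Real.sqrt_nonneg _

theorem svDesc_antitone {n₁ n₂ : ℕ} (X : Matrix (Fin n₁) (Fin n₂) ℝ) : Antitone (svDesc X) :=
  fun _ _ hij => Tuple.monotone_sort (singularValues X) (Fin.rev_le_rev.mpr hij)

theorem nuclearNorm_eq_sum_svDesc {n₁ n₂ : ℕ} (X : Matrix (Fin n₁) (Fin n₂) ℝ) :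
    nuclearNorm X = ∑ i, svDesc X i :=
  (Equiv.sum_comp (Fin.revPerm.trans (Tuple.sort (singularValues X))) _).symm

theorem truncatedNuclearNorm_add_sum_filter_lt {n : ℕ} (r : ℕ) (X : Matrix (Fin n) (Fin n) ℝ) :
    truncatedNuclearNorm r X + ∑ i ∈ univ.filter (fun i : Fin n => (i : ℕ) < r), svDesc X i =
      nuclearNorm X := by
  rw [nuclearNorm_eq_sum_svDesc,
    ← sum_filter_not_add_sum_filter univ (fun i : Fin n => (i : ℕ) < r)]
  simp only [truncatedNuclearNorm, not_lt]

theorem exists_svd_svDesc {n : ℕ} (X : Matrix (Fin n) (Fin n) ℝ) :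
    ∃ W V : Matrix (Fin n) (Fin n) ℝ,
      Wᵀ * W = 1 ∧ Vᵀ * V = 1 ∧ X = W * diagonal (svDesc X) * Vᵀ := by
  have hA := isHermitian_conjTranspose_mul_self X
  let ρ : Equiv.Perm (Fin n) := Fin.revPerm.trans (Tuple.sort (singularValues X))
  let U : Matrix (Fin n) (Fin n) ℝ := hA.eigenvectorUnitary
  have hU : Uᵀ * U = 1 := by
    simpa [U, star_eq_conjTranspose] using Unitary.coe_star_mul_self hA.eigenvectorUnitary
  have hdiag : Uᵀ * (Xᵀ * X) * U = diagonal hA.eigenvalues := by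
    simpa [U, star_eq_conjTranspose] using hA.conjStarAlgAut_star_eigenvectorUnitary
  -- Reorder the eigenvectors of `Xᵀ X` so that the singular values come out nonincreasing.
  let V := U.submatrix id ρ
  have hV : Vᵀ * V = 1 := by
    rw [← Matrix.mul_one Vᵀ, transpose_submatrix_mul_mul_submatrix, Matrix.mul_one, hU,
      submatrix_one_equiv]
  have hXV : (X * V)ᵀ * (X * V) = diagonal (svDesc X ^ 2) := by
    rw [transpose_mul, Matrix.mul_assoc, ← Matrix.mul_assoc Xᵀ, ← Matrix.mul_assoc,
      transpose_submatrix_mul_mul_submatrix, hdiag, submatrix_diagonal_equiv]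
    congr 1
    funext i
    exact (Real.sq_sqrt (eigenvalues_conjTranspose_mul_self_nonneg X _)).symm
  obtain ⟨W, hW, hWV⟩ := exists_eq_mul_diagonal_of_transpose_mul_self_eq_diagonal_sq hXV
  refine ⟨W, V, hW, hV, ?_⟩
  rw [← hWV, Matrix.mul_assoc, mul_eq_one_comm.mp hV, Matrix.mul_one]

theorem truncatedNuclearNorm_eq_general (n r : ℕ) (hrn : r ≤ n)
    (X : Matrix (Fin n) (Fin n) ℝ) :
    ∃ m : ℝ,
      IsGreatest { t : ℝ | ∃ (U : Matrix (Fin n) (Fin r) ℝ) (V : Matrix (Fin n) (Fin r) ℝ),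
          Uᵀ * U = 1 ∧ Vᵀ * V = 1 ∧ t = (Uᵀ * X * V).trace } m ∧
      truncatedNuclearNorm r X = nuclearNorm X - m := by
  obtain ⟨W, V, hW, hV, hX⟩ := exists_svd_svDesc X
  have htrace : ∀ U U' : Matrix (Fin n) (Fin r) ℝ,
      Uᵀ * X * U' = (Wᵀ * U)ᵀ * diagonal (svDesc X) * (Vᵀ * U') := fun U U' => by
    conv_lhs => rw [hX]
    simp only [transpose_mul, transpose_transpose, Matrix.mul_assoc]
  have hWt : (Wᵀ)ᵀ * Wᵀ = 1 := by rw [transpose_transpose, mul_eq_one_comm, hW]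
  have hVt : (Vᵀ)ᵀ * Vᵀ = 1 := by rw [transpose_transpose, mul_eq_one_comm, hV]
  obtain ⟨S, hS, hStr⟩ := exists_trace_transpose_mul_diagonal_mul_eq hrn (svDesc X)
  refine ⟨_, ⟨⟨W * S, V * S, transpose_mul_self_mul_eq_one hW hS,
    transpose_mul_self_mul_eq_one hV hS, ?_⟩, ?_⟩,
    eq_sub_of_add_eq (truncatedNuclearNorm_add_sum_filter_lt r X)⟩
  · rw [htrace, ← Matrix.mul_assoc Wᵀ, hW, ← Matrix.mul_assoc Vᵀ, hV, Matrix.one_mul, hStr]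
  · rintro t ⟨U, U', hU, hU', rfl⟩
    rw [htrace]
    exact trace_transpose_mul_diagonal_mul_le hrn (svDesc_antitone X) (svDesc_nonneg X)
      (transpose_mul_self_mul_eq_one hVt hU') (transpose_mul_self_mul_eq_one hWt hU)

/-- `‖X‖_r = ‖X‖_* − max { tr(Uᵀ X V) : Uᵀ U = Vᵀ V = I_r }`. -/
theorem truncatedNuclearNorm_eq (n r : ℕ) (hr : 0 < r) (hrn : r ≤ n)
    (X : Matrix (Fin n) (Fin n) ℝ) :
    ∃ m : ℝ,
      IsGreatest { t : ℝ | ∃ (U : Matrix (Fin n) (Fin r) ℝ) (V : Matrix (Fin n) (Fin r) ℝ),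
          Uᵀ * U = 1 ∧ Vᵀ * V = 1 ∧ t = (Uᵀ * X * V).trace } m ∧
      truncatedNuclearNorm r X = nuclearNorm X - m :=
  truncatedNuclearNorm_eq_general n r hrn X
end
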